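/- Let h = y² − xz² ∈ ℂ[x,y,z] and let L be the ideal of 2×2 minors of the matrix with rows (s₀, s₁, s₂) and (∂h/∂x, ∂h/∂y, ∂h/∂z) = (−z², 2y, −2xz) in S = ℂ[x,y,z][s₀,s₁,s₂]. Then in the chart s₀ = 1, the saturation J = (⟨h⟩ + L) : ⟨y,z⟩^∞ contains the three elements x − (1/4)z²s₁², y + (1/2)z²s₁, and s₂ − (1/2)z s₁², i.e. these polynomials multiplied by suitable powers of y and z lie in ⟨h⟩ + L. -/
import Mathlib


open MvPolynomial

namespace WhitneySaturation

/-- The ambient polynomial ring `ℂ[x, y, z, s1, s2]` (the chart `s0 = 1`). -/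
noncomputable abbrev P : Type := MvPolynomial (Fin 5) ℂ

noncomputable def x : P := X 0
noncomputable def y : P := X 1
noncomputable def z : P := X 2
noncomputable def s1 : P := X 3
noncomputable def s2 : P := X 4

/-- `h = y^2 - x z^2`, the equation of the Whitney umbrella. -/
noncomputable def h : P := y ^ 2 - x * z ^ 2

/-- The ideal `⟨h⟩ + L` in the chart `s0 = 1`, where `L` is generated by the `2 × 2`
minors of the matrix with rows `(1, s1, s2)` and `(-z^2, 2y, -2xz)`. -/
noncomputable def I : Ideal P :=
  Ideal.span {h, 2 * y + z ^ 2 * s1, -2 * x * z + z ^ 2 * s2,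
    -2 * x * z * s1 - 2 * y * s2}

lemma h_def : h = y ^ 2 - x * z ^ 2 := rfl

lemma gen_mem (g : P)
    (hg : g ∈ ({h, 2 * y + z ^ 2 * s1, -2 * x * z + z ^ 2 * s2,
      -2 * x * z * s1 - 2 * y * s2} : Set P)) : g ∈ I :=
  Ideal.subset_span hg

lemma comb_mem (p1 p2 p3 p4 : P) :
    p1 * h + p2 * (2 * y + z ^ 2 * s1) + p3 * (-2 * x * z + z ^ 2 * s2) +
      p4 * (-2 * x * z * s1 - 2 * y * s2) ∈ I :=
  add_mem (add_mem (add_mem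
    (Ideal.mul_mem_left _ _ (gen_mem _ (by simp)))
    (Ideal.mul_mem_left _ _ (gen_mem _ (by simp))))
    (Ideal.mul_mem_left _ _ (gen_mem _ (by simp))))
    (Ideal.mul_mem_left _ _ (gen_mem _ (by simp)))

lemma mem_of_eq_comb {e : P} (p1 p2 p3 p4 : P)
    (he : e = p1 * h + p2 * (2 * y + z ^ 2 * s1) + p3 * (-2 * x * z + z ^ 2 * s2) +
      p4 * (-2 * x * z * s1 - 2 * y * s2)) : e ∈ I :=
  he ▸ comb_mem p1 p2 p3 p4

lemma cube_le {f : P} (h1 : f * y ^ 3 ∈ I) (h2 : f * (y ^ 2 * z) ∈ I)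
    (h3 : f * (y * z ^ 2) ∈ I) (h4 : f * z ^ 3 ∈ I) :
    (Ideal.span {y, z}) ^ 3 ≤ I.colon (Ideal.span {f}) := by
  rw [pow_succ, pow_succ, pow_one, Ideal.span_mul_span', Ideal.span_mul_span',
    Ideal.span_le]
  rintro _ ⟨_, ⟨u, hu, v, hv, rfl⟩, w, hw, rfl⟩
  rw [SetLike.mem_coe, Ideal.mem_colon_span_singleton]
  simp only [Set.mem_insert_iff, Set.mem_singleton_iff] at hu hv hw
  rcases hu with rfl | rfl <;> rcases hv with rfl | rfl <;> rcases hw with rfl | rfl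
  · rw [show y * y * y * f = f * y ^ 3 by ring]; exact h1
  · rw [show y * y * z * f = f * (y ^ 2 * z) by ring]; exact h2
  · rw [show y * z * y * f = f * (y ^ 2 * z) by ring]; exact h2
  · rw [show y * z * z * f = f * (y * z ^ 2) by ring]; exact h3
  · rw [show z * y * y * f = f * (y ^ 2 * z) by ring]; exact h2
  · rw [show z * y * z * f = f * (y * z ^ 2) by ring]; exact h3
  · rw [show z * z * y * f = f * (y * z ^ 2) by ring]; exact h3
  · rw [show z * z * z * f = f * z ^ 3 by ring]; exact h4

lemma A_cube : ∀ q ∈ (Ideal.span {y, z}) ^ 3, (4 * x - z ^ 2 * s1 ^ 2) * q ∈ I := by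
  intro q hq
  have hle := cube_le (f := 4 * x - z ^ 2 * s1 ^ 2)
    (mem_of_eq_comb (2 * s1 * y ^ 2) (2 * x * y ^ 2 - s1 * y ^ 3) 0 0
      (by rw [h_def]; ring))
    (mem_of_eq_comb (2 * s1 * y * z) (2 * x * y * z - s1 * y ^ 2 * z) 0 0
      (by rw [h_def]; ring))
    (mem_of_eq_comb (-4 * y) (y * (2 * y + z ^ 2 * s1) - 2 * y * z ^ 2 * s1) 0 0
      (by rw [h_def]; ring))
    (mem_of_eq_comb (-4 * z) (z * (2 * y + z ^ 2 * s1) - 2 * z ^ 3 * s1) 0 0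
      (by rw [h_def]; ring))
  have := Ideal.mem_colon_span_singleton.mp (hle hq)
  rwa [mul_comm] at this

lemma C_cube : ∀ q ∈ (Ideal.span {y, z}) ^ 3, (2 * s2 - z * s1 ^ 2) * q ∈ I := by
  intro q hq
  have hle := cube_le (f := 2 * s2 - z * s1 ^ 2)
    (mem_of_eq_comb (-(y * z * s1 ^ 2)) (-(x * y * z * s1)) 0 (-(y ^ 2))
      (by rw [h_def]; ring))
    (mem_of_eq_comb (2 * y * s1) (-(y ^ 2 * s1)) 0 (-(y * z))
      (by rw [h_def]; ring))
    (mem_of_eq_comb (2 * z * s1) (-(y * z * s1)) 0 (-(z ^ 2))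
      (by rw [h_def]; ring))
    (mem_of_eq_comb (-4) ((2 * y + z ^ 2 * s1) - 2 * z ^ 2 * s1) (2 * z) 0
      (by rw [h_def]; ring))
  have := Ideal.mem_colon_span_singleton.mp (hle hq)
  rwa [mul_comm] at this

lemma C4 : (C (1 / 4 : ℂ) : P) * 4 = 1 := by
  rw [show (4 : P) = C (4 : ℂ) from (map_ofNat (C : ℂ →+* P) 4).symm, ← C_mul, ← C_1]
  norm_num

lemma C2 : (C (1 / 2 : ℂ) : P) * 2 = 1 := by
  rw [show (2 : P) = C (2 : ℂ) from (map_ofNat (C : ℂ →+* P) 2).symm, ← C_mul, ← C_1]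
  norm_num

/-- The three elements `x - (1/4) z² s1²`, `y + (1/2) z² s1` and
`s2 - (1/2) z s1²` lie in the saturation `(⟨h⟩ + L) : ⟨y, z⟩^∞` in the chart `s0 = 1`:
multiplied by a suitable power of the ideal `⟨y, z⟩` they land in `⟨h⟩ + L`. -/
theorem saturation_contains_chart_equations :
    ∃ N : ℕ, ∀ q ∈ (Ideal.span {y, z}) ^ N,
      (x - C (1 / 4 : ℂ) * z ^ 2 * s1 ^ 2) * q ∈ I ∧
      (y + C (1 / 2 : ℂ) * z ^ 2 * s1) * q ∈ I ∧
      (s2 - C (1 / 2 : ℂ) * z * s1 ^ 2) * q ∈ I := by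
  refine ⟨3, fun q hq => ⟨?_, ?_, ?_⟩⟩
  · have hA := A_cube q hq
    have e : (x - C (1 / 4 : ℂ) * z ^ 2 * s1 ^ 2) * q =
        C (1 / 4 : ℂ) * ((4 * x - z ^ 2 * s1 ^ 2) * q) := by
      linear_combination (-(x * q)) * C4
    rw [e]
    exact Ideal.mul_mem_left _ _ hA
  · have hg2 : (2 * y + z ^ 2 * s1 : P) ∈ I := gen_mem _ (by simp)
    have e : (y + C (1 / 2 : ℂ) * z ^ 2 * s1) * q =
        C (1 / 2 : ℂ) * ((2 * y + z ^ 2 * s1) * q) := by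
      linear_combination (-(y * q)) * C2
    rw [e]
    exact Ideal.mul_mem_left _ _ (Ideal.mul_mem_right q _ hg2)
  · have hC := C_cube q hq
    have e : (s2 - C (1 / 2 : ℂ) * z * s1 ^ 2) * q =
        C (1 / 2 : ℂ) * ((2 * s2 - z * s1 ^ 2) * q) := by
      linear_combination (-(s2 * q)) * C2
    rw [e]
    exact Ideal.mul_mem_left _ _ hC

end WhitneySaturation
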